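/- arXiv:1801.00238 — 9 statements merged into one kernel-verified Lean document; each statement's English description precedes it below -/
import Mathlib

section
/- If κ is an infinite cardinal with κ ≤ 2^κ and c : κ × ω → 2 witnesses the negative polarized partition relation (κ,ω) ↛ ((κ,ω))^{1,1}_2 (i.e. there is no A ⊆ κ of cardinality κ and infinite B ⊆ ω with c constant on A × B), and λ is a cardinal with λ > cf(λ) = κ, then (λ,ω) ↛ ((λ,ω))^{1,1}_2: there is a coloring d : λ × ω → 2 such that there is no A ⊆ λ of cardinality λ and infinite B ⊆ ω with d constant on A × B. -/
/-!
Compose `c` with a map `h : λ → κ` whose fibres are bounded, hence of size `< λ`. Since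
`cf λ = κ`, the infinite pigeonhole principle forces `h` to map every set of size `λ` onto a set of
size at least `κ`, so a homogeneous rectangle of `c ∘ h` yields one of `c`.
-/

open Cardinal Set

universe u

namespace Cardinal

theorem mk_lt_of_bddAbove_toType_ord {l : Cardinal} (hl : ℵ₀ ≤ l) {s : Set l.ord.ToType}
    (hs : BddAbove s) : #s < l := by
  obtain ⟨x, hx⟩ := hs
  have hIic : #(Iic x) < l := by
    simpa using mk_Iic_lt x (by simp) (by simpa using hl)
  exact (mk_le_mk_of_subset hx).trans_lt hIic

/-- The analogue of the paper's interval map `h`: send `a` to (the index of) a point of a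
cofinal set of size `cof α` above it. -/
theorem exists_map_toType_cof_bddAbove_fibers (α : Type u) [Preorder α] :
    ∃ h : α → (Order.cof α).ord.ToType, ∀ y, BddAbove (h ⁻¹' {y}) := by
  obtain ⟨S, hS, hSmk⟩ := Order.exists_cof_eq α
  choose g hgS hg using hS
  obtain ⟨e⟩ := Cardinal.eq.1 (hSmk.trans (mk_ord_toType _).symm)
  refine ⟨fun a => e ⟨g a, hgS a⟩, fun y => ⟨e.symm y, ?_⟩⟩
  rintro a rfl
  simpa using hg a

theorem cof_ord_le_mk_image {α β : Type u} {l : Cardinal} (hl : ℵ₀ ≤ l) (h : α → β)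
    (hfib : ∀ y, #(h ⁻¹' {y}) < l) {A : Set α} (hA : #A = l) : l.ord.cof ≤ #(h '' A) := by
  by_contra! hsmall
  obtain ⟨y, t, htA, hlt, hty⟩ := infinite_pigeonhole_set
    (fun a : A => (⟨h a, mem_image_of_mem h a.2⟩ : h '' A)) l hA.ge hl hsmall
  have htfib : t ⊆ h ⁻¹' {(y : β)} := fun a ha => by simp [← hty ha]
  exact (hlt.trans (mk_le_mk_of_subset htfib)).not_gt (hfib y)

end Cardinal

/-- `d` fails to witness `(μ, ω) ↛ ((μ, ω))^{1,1}_2`. -/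
def HasHomogeneousRectangle {α : Type*} (d : α → ℕ → Bool) (μ : Cardinal) : Prop :=
  ∃ (A : Set α) (B : Set ℕ) (i : Bool), #A = μ ∧ B.Infinite ∧ ∀ a ∈ A, ∀ b ∈ B, d a b = i

theorem HasHomogeneousRectangle.of_comp {α β : Type u} {c : β → ℕ → Bool} {h : α → β}
    {l κ : Cardinal} (hh : ∀ A : Set α, #A = l → κ ≤ #(h '' A))
    (hd : HasHomogeneousRectangle (fun a n => c (h a) n) l) : HasHomogeneousRectangle c κ := by
  obtain ⟨A, B, i, hA, hB, hAB⟩ := hd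
  obtain ⟨A', hA'A, hA'⟩ := le_mk_iff_exists_subset.1 (hh A hA)
  refine ⟨A', B, i, hA', hB, fun y hy n hn => ?_⟩
  obtain ⟨a, ha, rfl⟩ := hA'A hy
  exact hAB a ha n hn

theorem stmt_0_general (κ l : Cardinal) (hκ : ℵ₀ ≤ κ)
    (c : κ.ord.ToType → ℕ → Bool)
    (hc : ¬ ∃ (A : Set κ.ord.ToType) (B : Set ℕ) (i : Bool),
        #A = κ ∧ B.Infinite ∧ ∀ a ∈ A, ∀ b ∈ B, c a b = i)
    (hcf : l.ord.cof = κ) :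
    ∃ d : l.ord.ToType → ℕ → Bool,
      ¬ ∃ (A : Set l.ord.ToType) (B : Set ℕ) (i : Bool),
        #A = l ∧ B.Infinite ∧ ∀ a ∈ A, ∀ b ∈ B, d a b = i := by
  have hl : ℵ₀ ≤ l := hκ.trans (hcf ▸ Ordinal.cof_ord_le l)
  obtain ⟨h, hh⟩ : ∃ h : l.ord.ToType → κ.ord.ToType, ∀ y, BddAbove (h ⁻¹' {y}) := by
    rw [← hcf, ← Ordinal.cof_toType]
    exact exists_map_toType_cof_bddAbove_fibers _
  refine ⟨fun a n => c (h a) n, fun hd => hc (HasHomogeneousRectangle.of_comp (fun A hA => ?_) hd)⟩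
  exact hcf ▸ cof_ord_le_mk_image hl h (fun y => mk_lt_of_bddAbove_toType_ord hl (hh y)) hA

/-- If `κ` is an infinite cardinal with `κ ≤ 2^κ`, `c : κ × ω → 2` witnesses
`(κ,ω) ↛ ((κ,ω))^{1,1}_2`, and `λ > cf(λ) = κ`, then `(λ,ω) ↛ ((λ,ω))^{1,1}_2`. -/
theorem stmt_0 (κ l : Cardinal) (hκ : ℵ₀ ≤ κ) (hκ2 : κ ≤ 2 ^ κ)
    (c : κ.ord.ToType → ℕ → Bool)
    (hc : ¬ ∃ (A : Set κ.ord.ToType) (B : Set ℕ) (i : Bool),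
        #A = κ ∧ B.Infinite ∧ ∀ a ∈ A, ∀ b ∈ B, c a b = i)
    (hcf : l.ord.cof = κ) (hl : κ < l) :
    ∃ d : l.ord.ToType → ℕ → Bool,
      ¬ ∃ (A : Set l.ord.ToType) (B : Set ℕ) (i : Bool),
        #A = l ∧ B.Infinite ∧ ∀ a ∈ A, ∀ b ∈ B, d a b = i :=
  stmt_0_general κ l hκ c hc hcf
end

section
/- If the cofinality of the meagre ideal on 2^ω equals ℵ₁ (i.e., there is a family of ℵ₁ many meagre sets cofinal under inclusion among all meagre subsets of 2^ω), then there exists a Luzin set: an uncountable set L ⊆ 2^ω such that every uncountable subset of L is nonmeagre. -/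
open Cardinal Set Filter Topology

/-! Choose `x i` outside the meagre set `⋃_{j < i} F j`. A meagre set `S ⊆ range x` lies in some
`F i`, and `x j ∈ F i` forces `j ≤ i`, so `S ⊆ x '' Iic i` is countable. The range itself is
uncountable, since otherwise it would be meagre and contained in some `F i`, which misses `x j`
for every `j > i`. -/

instance Pi.nhdsNE_neBot {ι : Type*} {α : ι → Type*} [∀ i, TopologicalSpace (α i)]
    [∀ i, Nontrivial (α i)] [Infinite ι] (x : ∀ i, α i) : NeBot (𝓝[≠] x) := by
  classical
  choose y hy using fun i => exists_ne (x i)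
  rw [← mem_closure_iff_nhdsWithin_neBot]
  refine mem_closure_of_tendsto (f := fun i => Function.update x i (y i)) (b := cofinite)
    (tendsto_pi_nhds.2 fun k => tendsto_const_nhds.congr' ?_) (Eventually.of_forall fun i h => ?_)
  · filter_upwards [eventually_cofinite_ne k] with i hi
    exact (Function.update_of_ne hi.symm _ _).symm
  · exact hy i (by simpa using congr_fun h i)

theorem Set.Countable.isMeagre {X : Type*} [TopologicalSpace X] [T1Space X]
    [∀ x : X, NeBot (𝓝[≠] x)] {s : Set X} (hs : s.Countable) : IsMeagre s := by
  have hsingleton (x : X) : IsMeagre {x} :=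
    (isClosed_singleton.isNowhereDense_iff.2 (interior_singleton x)).isMeagre
  simpa using isMeagre_biUnion hs fun x _ => hsingleton x

theorem exists_forall_lt_notMem {X ι : Type*} [TopologicalSpace X] [BaireSpace X] [Nonempty X]
    [Preorder ι] (hι : ∀ i : ι, (Iio i).Countable) {F : ι → Set X} (hF : ∀ i, IsMeagre (F i)) :
    ∃ x : ι → X, ∀ ⦃i j⦄, j < i → x i ∉ F j := by
  have hcompl (i : ι) : (⋃ j ∈ Iio i, F j)ᶜ.Nonempty :=
    (dense_of_mem_residual (isMeagre_biUnion (hι i) fun j _ => hF j)).nonempty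
  choose x hx using hcompl
  exact ⟨x, fun i j hji hxj => hx i (mem_biUnion hji hxj)⟩

def IsLuzinSet {X : Type*} [TopologicalSpace X] (L : Set X) : Prop :=
  ¬ L.Countable ∧ ∀ S ⊆ L, ¬ S.Countable → ¬ IsMeagre S

theorem exists_isLuzinSet_of_cofinal {X ι : Type*} [TopologicalSpace X] [BaireSpace X]
    [T1Space X] [∀ x : X, NeBot (𝓝[≠] x)] [Nonempty X] [LinearOrder ι] [Uncountable ι]
    (hι : ∀ i : ι, (Iic i).Countable) {F : ι → Set X} (hF : ∀ i, IsMeagre (F i))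
    (hcof : ∀ A : Set X, IsMeagre A → ∃ i, A ⊆ F i) :
    ∃ L : Set X, IsLuzinSet L := by
  obtain ⟨x, hx⟩ := exists_forall_lt_notMem (fun i => (hι i).mono Iio_subset_Iic_self) hF
  have hle {i j : ι} (h : x j ∈ F i) : j ≤ i := not_lt.1 fun hij => hx hij h
  refine ⟨range x, fun hcount => ?_, fun S hSx hS hSmeagre => hS ?_⟩
  · obtain ⟨i, hi⟩ := hcof _ hcount.isMeagre
    obtain ⟨j, hj⟩ : (Iic i)ᶜ.Nonempty := nonempty_compl.2 fun h => not_countable_univ (h ▸ hι i)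
    exact hj (hle (hi (mem_range_self j)))
  · obtain ⟨i, hi⟩ := hcof S hSmeagre
    refine ((hι i).image x).mono fun s hs => ?_
    obtain ⟨j, rfl⟩ := hSx hs
    exact mem_image_of_mem x (hle (hi hs))

theorem Cardinal.countable_Iic_toType_ord_aleph_one (i : (aleph 1).ord.ToType) :
    (Iic i).Countable := by
  rw [← le_aleph0_iff_set_countable, ← lt_aleph_one_iff]
  simpa using mk_Iic_lt i (by simp) (by simp)

instance Cardinal.uncountable_toType_ord_aleph_one : Uncountable (aleph 1).ord.ToType := by
  rw [← aleph0_lt_mk_iff]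
  simp

/-- If there is a family of `ℵ₁` many meagre subsets of `2^ω` cofinal (under `⊆`)
among all meagre sets, then there exists a Luzin set: an uncountable set all of
whose uncountable subsets are nonmeagre. -/
theorem stmt_3 (F : (Cardinal.aleph 1).ord.ToType → Set (ℕ → Bool))
    (hF : ∀ i, IsMeagre (F i))
    (hcof : ∀ A : Set (ℕ → Bool), IsMeagre A → ∃ i, A ⊆ F i) :
    ∃ L : Set (ℕ → Bool), ¬ L.Countable ∧
      ∀ S ⊆ L, ¬ S.Countable → ¬ IsMeagre S :=
  exists_isLuzinSet_of_cofinal countable_Iic_toType_ord_aleph_one hF hcof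
end

section
/- If there exists a Luzin set in 2^ω, then there is a coloring c : [ω₁]² → ω such that (1) every uncountable A ⊆ ω₁ realizes all colors (witnessing ω₁ ↛ [ω₁]²_ω), and (2) there is no triangle with three distinct colors, i.e., for all distinct α, β, γ < ω₁, the set {c(α,β), c(β,γ), c(γ,α)} has at most 2 elements. -/
/-!
Embed `ω₁` into the Luzin set as `α ↦ x_α` and colour `{α, β}` by the first coordinate of
`Nat.unpair (firstDiff x_α x_β)`. Since `firstDiff` is an ultrametric, two of the three values
of `firstDiff` on a triangle coincide, so no triangle gets three colours. If an uncountable `A`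
omitted the colour `k`, its image would never split at any of the infinitely many levels
`Nat.pair k m`; a set that never splits at infinitely many levels is nowhere dense, which
contradicts the Luzin property.
-/

open Cardinal PiNat

namespace PiNat

variable {E : ℕ → Type*}

theorem firstDiff_eq_or_eq_or_eq {x y z : ∀ n, E n} (hxy : x ≠ y) (hyz : y ≠ z) (hxz : x ≠ z) :
    firstDiff x y = firstDiff y z ∨ firstDiff y z = firstDiff x z ∨
      firstDiff x y = firstDiff x z := by
  have := min_firstDiff_le x y z hxz
  have := min_firstDiff_le y x z hyz
  have := min_firstDiff_le x z y hxy
  rw [firstDiff_comm y x] at *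
  rw [firstDiff_comm z y] at *
  omega

theorem firstDiff_eq_of_mem_cylinder {x y : ∀ n, E n} {n : ℕ} (hy : y ∈ cylinder x n)
    (hn : y n ≠ x n) : firstDiff y x = n :=
  le_antisymm (not_lt.1 fun h => hn (apply_eq_of_lt_firstDiff h))
    ((mem_cylinder_iff_le_firstDiff (fun h => hn (congrFun h n)) n).1 hy)

variable [∀ n, TopologicalSpace (E n)] [∀ n, DiscreteTopology (E n)] [∀ n, Nontrivial (E n)]

theorem isNowhereDense_of_firstDiff_notMem {S : Set (∀ n, E n)} {K : Set ℕ} (hK : K.Infinite)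
    (hS : ∀ x ∈ S, ∀ y ∈ S, x ≠ y → firstDiff x y ∉ K) : IsNowhereDense S := by
  refine Set.eq_empty_iff_forall_notMem.2 fun x hx => ?_
  obtain ⟨_, ⟨x', m, rfl⟩, hxm, hsub⟩ :=
    (isTopologicalBasis_cylinders E).exists_subset_of_mem_open hx isOpen_interior
  obtain ⟨n, hnK, hmn⟩ := hK.exists_gt m
  have hcyl : cylinder x n ⊆ closure S := fun y hy =>
    interior_subset (hsub (mem_cylinder_iff_eq.1 hxm ▸ cylinder_anti x hmn.le hy))
  obtain ⟨s, hsx, hsS⟩ := mem_closure_iff.1 (hcyl (self_mem_cylinder x n)) _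
    (isOpen_cylinder E x n) (self_mem_cylinder x n)
  obtain ⟨e, he⟩ := exists_ne (s n)
  -- `S` cannot split at level `n ∈ K`, so it avoids a neighbourhood of this point of `closure S`.
  have hz : Function.update s n e ∈ closure S := hcyl <| mem_cylinder_iff_eq.2
    ((mem_cylinder_iff_eq.1 (update_mem_cylinder s n e)).trans (mem_cylinder_iff_eq.1 hsx))
  obtain ⟨t, htz, htS⟩ := mem_closure_iff.1 hz _ (isOpen_cylinder E _ (n + 1))
    (self_mem_cylinder _ (n + 1))
  have hts : t ∈ cylinder s n := fun i hi => by
    rw [htz i (hi.trans n.lt_succ_self), Function.update_of_ne hi.ne]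
  have htn : t n ≠ s n := by
    rw [htz n n.lt_succ_self, Function.update_self]; exact he
  exact hS t htS s hsS (fun h => htn (congrFun h n)) (firstDiff_eq_of_mem_cylinder hts htn ▸ hnK)

theorem exists_ne_unpair_firstDiff_eq {S : Set (∀ n, E n)} (hS : ¬IsMeagre S) (k : ℕ) :
    ∃ x ∈ S, ∃ y ∈ S, x ≠ y ∧ (firstDiff x y).unpair.1 = k := by
  by_contra! h
  refine hS (isNowhereDense_of_firstDiff_notMem (K := Set.range (Nat.pair k))
    (Set.infinite_range_of_injective fun _ _ h => (Nat.pair_eq_pair.1 h).2) ?_).isMeagre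
  rintro x hx y hy hxy ⟨m, hm⟩
  exact h x hx y hy hxy (by rw [← hm, Nat.unpair_pair])

end PiNat

theorem Finset.card_le_two_of_eq_or_eq_or_eq {α : Type*} [DecidableEq α] {a b c : α}
    (h : a = b ∨ b = c ∨ a = c) : ({a, b, c} : Finset α).card ≤ 2 := by
  rcases h with rfl | rfl | rfl <;> simp [Finset.card_le_two]

universe u v in
theorem nonempty_embedding_toType_aleph_one (α : Type v) [Uncountable α] :
    Nonempty ((aleph.{u} 1).ord.ToType ↪ α) := by
  rw [← lift_mk_le', mk_ord_toType, lift_aleph, Ordinal.lift_one, aleph_one_le_iff, aleph0_lt_lift]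
  exact aleph0_lt_mk

/-- If there is a Luzin set in `2^ω`, then there is a colouring `c : [ω₁]² → ω`
witnessing `ω₁ ↛ [ω₁]²_ω` such that no triangle receives three distinct colours. -/
theorem stmt_4
    (hLuzin : ∃ L : Set (ℕ → Bool), ¬ L.Countable ∧
      ∀ S ⊆ L, ¬ S.Countable → ¬ IsMeagre S) :
    ∃ c : (Cardinal.aleph 1).ord.ToType → (Cardinal.aleph 1).ord.ToType → ℕ,
      (∀ a b, c a b = c b a) ∧
      (∀ A : Set (Cardinal.aleph 1).ord.ToType, ¬ A.Countable →
        ∀ k : ℕ, ∃ a ∈ A, ∃ b ∈ A, a ≠ b ∧ c a b = k) ∧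
      (∀ a b d : (Cardinal.aleph 1).ord.ToType, a ≠ b → b ≠ d → a ≠ d →
        ({c a b, c b d, c a d} : Finset ℕ).card ≤ 2) := by
  obtain ⟨L, hL, hLuzin⟩ := hLuzin
  have : Uncountable L := by rwa [← Set.countable_coe_iff, not_countable_iff] at hL
  obtain ⟨f⟩ := nonempty_embedding_toType_aleph_one L
  set g := Subtype.val ∘ f
  have hg : g.Injective := Subtype.val_injective.comp f.injective
  refine ⟨fun a b => (firstDiff (g a) (g b)).unpair.1, fun a b => by simp only [firstDiff_comm],
    fun A hA k => ?_, fun a b d hab hbd had => ?_⟩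
  · have hgA : ¬IsMeagre (g '' A) := hLuzin _ (Set.image_subset_iff.2 fun a _ => (f a).2)
      fun h => hA (Set.countable_of_injective_of_countable_image hg.injOn h)
    obtain ⟨_, ⟨a, ha, rfl⟩, _, ⟨b, hb, rfl⟩, hab, rfl⟩ := exists_ne_unpair_firstDiff_eq hgA k
    exact ⟨a, ha, b, hb, ne_of_apply_ne g hab, rfl⟩
  · refine Finset.card_le_two_of_eq_or_eq_or_eq ?_
    rcases firstDiff_eq_or_eq_or_eq (hg.ne hab) (hg.ne hbd) (hg.ne had) with h | h | h <;>
      simp only [h, true_or, or_true]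
end

section
/- Suppose 𝔟 = 𝔡, i.e., there exists an unbounded scale ⟨f_α : α < 𝔟⟩ in ω^ω: a sequence well-ordered by eventual domination such that every g ∈ ω^ω is eventually dominated by some f_α. Then there is a coloring χ : 𝔟 × ω → ω such that for every X ⊆ 𝔟 of cardinality 𝔟 and every infinite Y ⊆ ω, χ restricted to X × Y is surjective onto ω. In particular (𝔡, ω) ↛ [(𝔟, ω)]^{1,1}_{ℵ₀}. -/
open Cardinal

/-- The unbounding number `𝔟` of `(ω^ω, ≤*)`. -/
noncomputable def bNum : Cardinal :=
  sInf {c | ∃ A : Set (ℕ → ℕ), #A = c ∧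
    ∀ g : ℕ → ℕ, ∃ f ∈ A, {n : ℕ | g n < f n}.Infinite}

/-- The dominating number `𝔡` of `(ω^ω, ≤*)`. -/
noncomputable def dNum : Cardinal :=
  sInf {c | ∃ A : Set (ℕ → ℕ), #A = c ∧
    ∀ g : ℕ → ℕ, ∃ f ∈ A, {n : ℕ | f n < g n}.Finite}

/-!
Index a dominating family of size `𝔡 = 𝔟` by `𝔟` and replace its `α`-th member by a common
`≤*`-bound `F α` of the members of index `≤ α`; such a bound exists because initial segments of
`𝔟` have size `< 𝔟`. A set `X` of size `𝔟` is cofinal in `𝔟`, so for each `g` some `F α` with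
`α ∈ X` eventually dominates `g`.

For `α` fixed, cut `ω` into intervals `[b j, b (j + 1))` with `F α (b j) < b (j + 1)` and colour
the `j`-th interval by the first coordinate of `Nat.unpair j`, so every colour recurs on
infinitely many intervals. If `F α` dominates the function sending `n` to an element of `Y` above
`n`, every late interval meets `Y`, hence `Y` sees every colour.
-/

open Filter Set

theorem exists_eventually_lt_of_mk_lt_bNum {A : Set (ℕ → ℕ)} (hA : #A < bNum) :
    ∃ g : ℕ → ℕ, ∀ f ∈ A, ∀ᶠ n in atTop, f n < g n := by
  by_contra! hA'
  refine hA.not_ge (csInf_le' ⟨A, rfl, fun g => ?_⟩)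
  obtain ⟨f, hfA, hf⟩ := hA' (g + 1)
  refine ⟨f, hfA, Nat.frequently_atTop_iff_infinite.1 ?_⟩
  simpa [Nat.lt_succ_iff] using hf

theorem exists_dominating_mk_eq_dNum :
    ∃ D : Set (ℕ → ℕ), #D = dNum ∧ ∀ g : ℕ → ℕ, ∃ f ∈ D, ∀ᶠ n in atTop, g n ≤ f n := by
  obtain ⟨D, hD, hdom⟩ := csInf_mem (s := {c | ∃ A : Set (ℕ → ℕ), #A = c ∧
      ∀ g : ℕ → ℕ, ∃ f ∈ A, {n : ℕ | f n < g n}.Finite})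
    ⟨_, univ, rfl, fun g => ⟨g, trivial, by simp⟩⟩
  refine ⟨D, hD, fun g => ?_⟩
  obtain ⟨f, hfD, hf⟩ := hdom g
  exact ⟨f, hfD, by simpa [← Nat.cofinite_eq_atTop, eventually_cofinite] using hf⟩

theorem exists_dominating_indexed_of_bNum_eq_dNum (h : bNum = dNum) :
    ∃ e : bNum.ord.ToType → ℕ → ℕ, ∀ g : ℕ → ℕ, ∃ γ, ∀ᶠ n in atTop, g n ≤ e γ n := by
  obtain ⟨D, hD, hdom⟩ := exists_dominating_mk_eq_dNum
  obtain ⟨eqv⟩ : Nonempty (bNum.ord.ToType ≃ D) :=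
    Cardinal.eq.1 (by rw [mk_ord_toType, h, hD])
  refine ⟨fun γ => eqv γ, fun g => ?_⟩
  obtain ⟨f, hfD, hf⟩ := hdom g
  exact ⟨eqv.symm ⟨f, hfD⟩, by simpa using hf⟩

theorem exists_eventually_le_forall_le {ι : Type} [PartialOrder ι]
    (hι : ∀ α : ι, #(Iio α) < bNum) (e : ι → ℕ → ℕ) (α : ι) :
    ∃ f : ℕ → ℕ, ∀ β ≤ α, ∀ᶠ n in atTop, e β n ≤ f n := by
  obtain ⟨g, hg⟩ := exists_eventually_lt_of_mk_lt_bNum (A := e '' Iio α)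
    (mk_image_le.trans_lt (hι α))
  refine ⟨fun n => max (g n) (e α n), fun β hβ => ?_⟩
  rcases hβ.lt_or_eq with hβ | rfl
  · exact (hg _ ⟨β, hβ, rfl⟩).mono fun n hn => le_max_of_le_left hn.le
  · exact Eventually.of_forall fun n => le_max_right _ _

theorem exists_mem_ge_of_mk_eq {c : Cardinal} {X : Set c.ord.ToType} (hX : #X = c)
    (γ : c.ord.ToType) : ∃ α ∈ X, γ ≤ α := by
  by_contra! hX'
  have hlt : #X < c := (mk_le_mk_of_subset (show X ⊆ Iio γ from hX')).trans_lt (by simpa using mk_Iio_lt γ)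
  exact hlt.ne hX

theorem StrictMono.findGreatest_apply_le_eq {b : ℕ → ℕ} (hb : StrictMono b) {j n : ℕ}
    (hj : b j ≤ n) (hn : n < b (j + 1)) : Nat.findGreatest (fun i => b i ≤ n) n = j := by
  rw [Nat.findGreatest_eq_iff]
  refine ⟨(hb.id_le j).trans hj, fun _ => hj, fun i hji _ hi => ?_⟩
  have := hb.monotone (show j + 1 ≤ i from hji)
  omega

def blockStart (f : ℕ → ℕ) : ℕ → ℕ
  | 0 => 0
  | j + 1 => blockStart f j + f (blockStart f j) + 1

theorem lt_blockStart_succ (f : ℕ → ℕ) (j : ℕ) : f (blockStart f j) < blockStart f (j + 1) := by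
  rw [blockStart]; omega

theorem blockStart_strictMono (f : ℕ → ℕ) : StrictMono (blockStart f) :=
  strictMono_nat_of_lt_succ fun j => by rw [blockStart]; omega

def blockIndex (f : ℕ → ℕ) (n : ℕ) : ℕ := Nat.findGreatest (fun j => blockStart f j ≤ n) n

theorem blockIndex_eq {f : ℕ → ℕ} {j n : ℕ} (hj : blockStart f j ≤ n)
    (hn : n < blockStart f (j + 1)) : blockIndex f n = j :=
  (blockStart_strictMono f).findGreatest_apply_le_eq hj hn

def blockColor (f : ℕ → ℕ) (n : ℕ) : ℕ := (Nat.unpair (blockIndex f n)).1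

theorem exists_mem_blockColor_eq {f : ℕ → ℕ} {Y : Set ℕ}
    (hY : ∀ᶠ n in atTop, ∃ y ∈ Y, n ≤ y ∧ y < f n) (k : ℕ) : ∃ y ∈ Y, blockColor f y = k := by
  obtain ⟨B, hB⟩ := eventually_atTop.1 hY
  have hBj : B ≤ blockStart f (Nat.pair k B) :=
    (Nat.right_le_pair k B).trans ((blockStart_strictMono f).id_le _)
  obtain ⟨y, hyY, hjy, hyf⟩ := hB _ hBj
  refine ⟨y, hyY, ?_⟩
  rw [blockColor, blockIndex_eq hjy (hyf.trans (lt_blockStart_succ f _)), Nat.unpair_pair]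

/-- If `𝔟 = 𝔡`, there is a colouring `χ : 𝔟 × ω → ω` which is onto `ω` on every
`X × Y` with `|X| = 𝔟` and `Y` infinite; hence `(𝔡,ω) ↛ [(𝔟,ω)]^{1,1}_{ℵ₀}`. -/
theorem stmt_5 (h : bNum = dNum) :
    ∃ χ : bNum.ord.ToType → ℕ → ℕ,
      ∀ X : Set bNum.ord.ToType, #X = bNum →
        ∀ Y : Set ℕ, Y.Infinite →
          ∀ k : ℕ, ∃ x ∈ X, ∃ y ∈ Y, χ x y = k := by
  obtain ⟨e, he⟩ := exists_dominating_indexed_of_bNum_eq_dNum h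
  choose F hF using exists_eventually_le_forall_le (fun α => by simpa using mk_Iio_lt α) e
  refine ⟨fun α => blockColor (F α), fun X hX Y hY k => ?_⟩
  choose g hgY hg using hY.exists_gt
  obtain ⟨γ, hγ⟩ := he (g + 1)
  obtain ⟨α, hαX, hγα⟩ := exists_mem_ge_of_mk_eq hX γ
  have hdom : ∀ᶠ n in atTop, ∃ y ∈ Y, n ≤ y ∧ y < F α n :=
    (hγ.and (hF α γ hγα)).mono fun n hn => ⟨g n, hgY n, (hg n).le, by simp at hn; omega⟩
  obtain ⟨y, hyY, hy⟩ := exists_mem_blockColor_eq hdom k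
  exact ⟨α, hαX, y, hyY, hy⟩
end

section
/- Suppose 𝔡 = ℵ₁, witnessed by a scale ⟨f_α : α < ω₁⟩ in ω^ω that is dominating (every g ∈ ω^ω is eventually strictly dominated by some f_α). Then there is a symmetric coloring χ : ω₁ × ω₁ → ω such that for every X ⊆ ω₁ of cardinality ℵ₁ and every countably infinite Y ⊆ ω₁, χ restricted to X × Y is surjective onto ω. That is, (ω₁, ω₁) ↛ [(ω₁, ω) or (ω, ω₁)]^{1,1}_{ℵ₀}. -/
/-!
Fix a dominating family `d` indexed by `ω₁`. Walking down along fixed enumerations of the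
initial segments gives injections `e x : Iio x → ℕ` with only countably many restrictions to
each `Iio δ`, and `d` improves to a scale `f` with `f z (f x j + 1) < f x (j + 1)` for `z < x`
and all large `j`. Colour `a < b` by the first coordinate, under `Nat.unpair`, of the index `m`
of the interval `(f b (m - 1), f b m]` containing `e b a`. For a countable infinite
`Y ⊆ Iio δ`, the countably many restrictions give one function `G` such that every set
`e x '' Y` meets every `[m, G m)` with `m` large; once `x` lies above some `z` with
`G ≤* f z`, every interval `(f x j, f x (j + 1)]` with `j` large meets `e x '' Y`, so every
colour appears on `{x} × Y`.
-/

open Cardinal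

open Filter Set

namespace PolarizedColoring

lemma pair_succ_ne_zero (n v : ℕ) : Nat.pair (n + 1) v ≠ 0 :=
  ((Nat.succ_pos n).trans_le (Nat.left_le_pair _ _)).ne'

noncomputable section CountableInitialSegments

open scoped Classical

variable {α : Type*} [LinearOrder α] [∀ x : α, Countable (Iio x)]

lemma countable_Iic (x : α) : (Iic x).Countable := by
  rw [← Iio_insert]
  exact (to_countable _).insert x

lemma not_bddAbove_of_not_countable {X : Set α} (hX : ¬X.Countable) : ¬BddAbove X :=
  fun ⟨a, ha⟩ => hX ((countable_Iic a).mono ha)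

lemma _root_.Set.Countable.exists_forall_lt (hα : ¬Countable α) {Y : Set α} (hY : Y.Countable) :
    ∃ δ, ∀ y ∈ Y, y < δ := by
  have : (⋃ y ∈ Y, Iic y) ≠ Set.univ := fun h =>
    hα (countable_univ_iff.1 (h ▸ hY.biUnion fun y _ => countable_Iic y))
  obtain ⟨δ, hδ⟩ := (ne_univ_iff_exists_notMem _).1 this
  simp only [mem_iUnion, mem_Iic, not_exists, not_le] at hδ
  exact ⟨δ, hδ⟩

/-- An enumeration of `Iio x`, equal to the junk value `x` when `Iio x` is empty. -/
def enumIio (x : α) : ℕ → α :=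
  if h : (Iio x).Nonempty then
    have : Nonempty (Iio x) := h.to_subtype
    fun n => (exists_surjective_nat (Iio x)).choose n
  else fun _ => x

lemma enumIio_lt {x : α} (h : (Iio x).Nonempty) (n : ℕ) : enumIio x n < x := by
  have : Nonempty (Iio x) := h.to_subtype
  rw [enumIio, dif_pos h]
  exact ((exists_surjective_nat (Iio x)).choose n).2

lemma exists_enumIio_eq {x z : α} (hz : z < x) : ∃ n, enumIio x n = z := by
  have : Nonempty (Iio x) := ⟨⟨z, hz⟩⟩
  obtain ⟨n, hn⟩ := (exists_surjective_nat (Iio x)).choose_spec ⟨z, hz⟩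
  exact ⟨n, by rw [enumIio, dif_pos ⟨z, hz⟩, hn]⟩

lemma enumIio_lt_of_lt {x y : α} {n : ℕ} (h : y < enumIio x n) (m : ℕ) : enumIio x m < x := by
  by_cases hx : (Iio x).Nonempty
  · exact enumIio_lt hx m
  · rw [enumIio, dif_neg hx] at h
    exact absurd ⟨y, h⟩ hx

variable [WellFoundedLT α]

/-- `walkCode x y` codes the walk from `x` down to `y`: each step goes to the first
`enumIio x n` above `y`, and records `n`. -/
def walkCode : α → α → ℕ :=
  wellFounded_lt.fix fun x walk y =>
    if h : ∃ n, y < enumIio x n then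
      Nat.pair (Nat.find h + 1)
        (walk (enumIio x (Nat.find h)) (enumIio_lt_of_lt (Nat.find_spec h) _) y)
    else 0

lemma walkCode_eq (x y : α) :
    walkCode x y = if h : ∃ n, y < enumIio x n then
      Nat.pair (Nat.find h + 1) (walkCode (enumIio x (Nat.find h)) y) else 0 := by
  rw [walkCode, WellFounded.fix_eq]

lemma walkCode_injOn (x : α) : InjOn (walkCode x) (Iio x) := by
  induction x using WellFoundedLT.induction with
  | _ x ih =>
    intro y hy z hz hyz
    rw [walkCode_eq x y, walkCode_eq x z] at hyz
    split_ifs at hyz with hny hnz hnz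
    · obtain ⟨hfind, hcode⟩ := Nat.pair_eq_pair.1 hyz
      have hz' := Nat.find_spec hnz
      rw [show Nat.find hnz = Nat.find hny by omega] at hz' hcode
      exact ih _ (enumIio_lt_of_lt (Nat.find_spec hny) _) (Nat.find_spec hny) hz' hcode
    · exact absurd hyz (pair_succ_ne_zero _ _)
    · exact absurd hyz.symm (pair_succ_ne_zero _ _)
    · -- both `y` and `z` are the largest element of `Iio x`
      have hmax : ∀ {u v : α}, v < x → (¬∃ n, u < enumIio x n) → v ≤ u := fun hv hu =>
        not_lt.1 fun huv =>
          hu <| (exists_enumIio_eq hv).imp fun n (hn : enumIio x n = _) => hn ▸ huv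
      exact le_antisymm (hmax hy hnz) (hmax hz hny)

/-- The restriction to `Iio δ` of `walkCode x` when `enumIio x` starts with `s 0, …, s (N - 1)`
below `δ` and `walkCode (enumIio x N)` restricts to `g`. -/
def extendTrace (δ : α) (N : ℕ) (s : ℕ → α) (g : Iio δ → ℕ) : Iio δ → ℕ := fun y =>
  if h : ∃ n, n < N ∧ (y : α) < s n then
    Nat.pair (Nat.find h + 1) (walkCode (s (Nat.find h)) y)
  else Nat.pair (N + 1) (g y)

lemma extendTrace_congr {δ : α} {N : ℕ} {s s' : ℕ → α} (h : ∀ n < N, s n = s' n)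
    (g : Iio δ → ℕ) : extendTrace δ N s g = extendTrace δ N s' g := by
  funext y
  have hss' : ∀ {n}, n < N ∧ (y : α) < s n ↔ n < N ∧ (y : α) < s' n :=
    fun {n} => and_congr_right fun hn => by rw [h n hn]
  by_cases hc : ∃ n, n < N ∧ (y : α) < s n
  · have hc' := hc.imp fun _ => hss'.1
    rw [extendTrace, extendTrace, dif_pos hc, dif_pos hc', Nat.find_congr' hss',
      h _ (Nat.find_spec hc').1]
  · rw [extendTrace, extendTrace, dif_neg hc, dif_neg fun hc' => hc (hc'.imp fun _ => hss'.2)]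

lemma domRestrict_walkCode_eq_extendTrace {δ x : α} {N : ℕ} (hδN : δ ≤ enumIio x N) :
    (Iio δ).domRestrict (walkCode x) =
      extendTrace δ N (enumIio x) ((Iio δ).domRestrict (walkCode (enumIio x N))) := by
  funext ⟨y, hy⟩
  have hex : ∃ n, y < enumIio x n := ⟨N, hy.trans_le hδN⟩
  rw [domRestrict_apply, walkCode_eq, dif_pos hex, extendTrace]
  by_cases hc : ∃ n, n < N ∧ y < enumIio x n
  · have hle : Nat.find hex ≤ Nat.find hc := Nat.find_min' hex (Nat.find_spec hc).2
    rw [dif_pos hc, le_antisymm hle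
      (Nat.find_min' hc ⟨hle.trans_lt (Nat.find_spec hc).1, Nat.find_spec hex⟩)]
  · have hfind : Nat.find hex = N := le_antisymm (Nat.find_min' hex (hy.trans_le hδN))
      (not_lt.1 fun hlt => hc ⟨_, hlt, Nat.find_spec hex⟩)
    rw [dif_neg hc, hfind, domRestrict_apply]

/-- Every trace on `Iio δ` is obtained from the trace of a point `≤ δ` by finitely many
`extendTrace` steps, each given by a finite list of points below `δ`. -/
def traceOfCode (δ : α) (c : Iic δ × List (List (Iio δ))) : Iio δ → ℕ :=
  c.2.foldr (fun l g => extendTrace δ l.length (fun n => (l.map Subtype.val).getD n δ) g)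
    ((Iio δ).domRestrict (walkCode c.1))

lemma domRestrict_walkCode_mem_range_traceOfCode (δ x : α) :
    (Iio δ).domRestrict (walkCode x) ∈ range (traceOfCode δ) := by
  induction x using WellFoundedLT.induction with
  | _ x ih =>
    rcases le_or_gt x δ with hxδ | hδx
    · exact ⟨(⟨x, hxδ⟩, []), rfl⟩
    have hex : ∃ n, δ ≤ enumIio x n := (exists_enumIio_eq hδx).imp fun _ hn => hn.ge
    have hN : ∀ n < Nat.find hex, enumIio x n < δ := fun n hn => not_le.1 (Nat.find_min hex hn)
    obtain ⟨⟨b, L⟩, hbL⟩ := ih _ (enumIio_lt ⟨δ, hδx⟩ (Nat.find hex))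
    let l : List (Iio δ) := List.ofFn fun n : Fin (Nat.find hex) => ⟨enumIio x n, hN n n.2⟩
    refine ⟨(b, l :: L), ?_⟩
    rw [domRestrict_walkCode_eq_extendTrace (Nat.find_spec hex), ← hbL]
    simp only [traceOfCode, List.foldr_cons, l, List.length_ofFn]
    exact extendTrace_congr (fun n hn => by simp [hn]) _

lemma countable_range_domRestrict_walkCode (δ : α) :
    (range fun x => (Iio δ).domRestrict (walkCode x)).Countable := by
  have : Countable (Iic δ) := (countable_Iic δ).to_subtype
  exact (countable_range (traceOfCode δ)).mono
    (range_subset_iff.2 (domRestrict_walkCode_mem_range_traceOfCode δ))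

def scale (d : α → ℕ → ℕ) : α → ℕ → ℕ :=
  wellFounded_lt.fix fun x F j => Nat.rec (d x 0) (fun j fj => fj + 1 + d x (j + 1) +
    ∑ n ∈ Finset.range (j + 1), if h : enumIio x n < x then F _ h (fj + 1) else 0) j

lemma scale_zero (d : α → ℕ → ℕ) (x : α) : scale d x 0 = d x 0 := by
  rw [scale, WellFounded.fix_eq]
  rfl

lemma scale_succ (d : α → ℕ → ℕ) (x : α) (j : ℕ) :
    scale d x (j + 1) = scale d x j + 1 + d x (j + 1) +
      ∑ n ∈ Finset.range (j + 1),
        if enumIio x n < x then scale d (enumIio x n) (scale d x j + 1) else 0 := by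
  conv_lhs => rw [scale, WellFounded.fix_eq]
  conv_rhs => rw [scale, WellFounded.fix_eq]
  simp only [dite_eq_ite]

lemma strictMono_scale (d : α → ℕ → ℕ) (x : α) : StrictMono (scale d x) :=
  strictMono_nat_of_lt_succ fun j => by rw [scale_succ]; omega

lemma le_scale (d : α → ℕ → ℕ) (x : α) : d x ≤ scale d x := by
  rintro (_ | j)
  · exact (scale_zero d x).ge
  · show d x (j + 1) ≤ scale d x (j + 1)
    rw [scale_succ]
    omega

lemma eventually_scale_lt_scale (d : α → ℕ → ℕ) {z x : α} (hzx : z < x) :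
    ∀ᶠ j in atTop, scale d z (scale d x j + 1) < scale d x (j + 1) := by
  obtain ⟨a, rfl⟩ := exists_enumIio_eq hzx
  filter_upwards [eventually_ge_atTop a] with j hj
  have := Finset.single_le_sum
    (f := fun n => if enumIio x n < x then scale d (enumIio x n) (scale d x j + 1) else 0)
    (fun _ _ => Nat.zero_le _) (Finset.mem_range.2 (by omega : a < j + 1))
  rw [if_pos hzx] at this
  rw [scale_succ d x j]
  omega

end CountableInitialSegments

def IsDominating {ι : Type*} (F : ι → ℕ → ℕ) : Prop :=
  ∀ g : ℕ → ℕ, ∃ i, g ≤ᶠ[atTop] F i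

lemma IsDominating.mono {ι : Type*} {F F' : ι → ℕ → ℕ} (hF : IsDominating F)
    (h : ∀ i, F i ≤ F' i) : IsDominating F' :=
  fun g => (hF g).imp fun i hi => hi.trans (.of_forall (h i))

/-- For monotone `g`, the index `m` of the interval `(g (m - 1), g m]` containing `w`. -/
noncomputable def intervalIndex (g : ℕ → ℕ) (w : ℕ) : ℕ := sInf {m | w ≤ g m}

lemma intervalIndex_eq_succ {g : ℕ → ℕ} (hg : Monotone g) {w j : ℕ} (h₁ : g j < w)
    (h₂ : w ≤ g (j + 1)) : intervalIndex g w = j + 1 :=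
  (Nat.sInf_upward_closed_eq_succ_iff (fun _ _ hmn hm => hm.trans (hg hmn)) j).2
    ⟨h₂, h₁.not_ge⟩

lemma exists_forall_inter_Ico_nonempty (S : ℕ → Set ℕ) :
    ∃ G : ℕ → ℕ, ∀ i, (S i).Infinite → ∀ m, i ≤ m → (S i ∩ Ico m (G m)).Nonempty := by
  refine ⟨fun m => ∑ i ∈ Finset.range (m + 1), (Nat.nth (· ∈ S i) m + 1),
    fun i hi m him => ⟨Nat.nth (· ∈ S i) m, Nat.nth_mem_of_infinite hi m,
      (Nat.nth_strictMono hi).le_apply, ?_⟩⟩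
  exact (Nat.lt_succ_self _).trans_le (Finset.single_le_sum
    (f := fun i => Nat.nth (· ∈ S i) m + 1) (fun _ _ => Nat.zero_le _)
    (Finset.mem_range.2 (by omega)))

lemma eventually_exists_intervalIndex_eq {g h G : ℕ → ℕ} {S : Set ℕ} {i : ℕ}
    (hg : StrictMono g) (hS : ∀ m, i ≤ m → (S ∩ Ico m (G m)).Nonempty) (hG : G ≤ᶠ[atTop] h)
    (hstep : ∀ᶠ j in atTop, h (g j + 1) < g (j + 1)) :
    ∀ᶠ j in atTop, ∃ w ∈ S, intervalIndex g w = j + 1 := by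
  have hG' : ∀ᶠ j in atTop, G (g j + 1) ≤ h (g j + 1) :=
    (tendsto_atTop_mono (fun j => Nat.le_succ (g j)) hg.tendsto_atTop).eventually hG
  filter_upwards [hG', hstep, eventually_ge_atTop i] with j hGj hj hij
  obtain ⟨w, hwS, hw₁, hw₂⟩ := hS (g j + 1) (by have : j ≤ g j := hg.id_le j; omega)
  exact ⟨w, hwS, intervalIndex_eq_succ hg.monotone (by omega) (by omega)⟩

section Coloring

variable {α : Type*} [LinearOrder α]

/-- The colour of `a < b` is read off the position of `e b a` in the scale `f b`; the pairing
makes every colour recur along the scale. -/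
noncomputable def color (e : α → α → ℕ) (f : α → ℕ → ℕ) (a b : α) : ℕ :=
  (intervalIndex (f (max a b)) (e (max a b) (min a b))).unpair.1

lemma color_comm (e : α → α → ℕ) (f : α → ℕ → ℕ) (a b : α) : color e f a b = color e f b a := by
  rw [color, color, max_comm, min_comm]

lemma exists_surjOn_color {e : α → α → ℕ} {f : α → ℕ → ℕ} {δ : α} {Y : Set α}
    (he : ∀ x, InjOn (e x) (Iio x)) (hδ : (range fun x => (Iio δ).domRestrict (e x)).Countable)
    (hf : ∀ x, StrictMono (f x))
    (hf_step : ∀ z x, z < x → ∀ᶠ j in atTop, f z (f x j + 1) < f x (j + 1))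
    (hf_dom : IsDominating f) (hY : Y.Infinite) (hYδ : Y ⊆ Iio δ) :
    ∃ z, ∀ x, δ < x → z < x → SurjOn (color e f x) Y Set.univ := by
  obtain ⟨τ, hτ⟩ := countable_iff_exists_subset_range.1 hδ
  obtain ⟨G, hG⟩ := exists_forall_inter_Ico_nonempty fun i => τ i '' (Subtype.val ⁻¹' Y)
  obtain ⟨z, hz⟩ := hf_dom G
  refine ⟨z, fun x hδx hzx k _ => ?_⟩
  obtain ⟨i, hi⟩ := hτ ⟨x, rfl⟩
  have hYx : Y ⊆ Iio x := fun y hy => (hYδ hy).trans hδx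
  have hSi : τ i '' (Subtype.val ⁻¹' Y) = e x '' Y := by
    rw [hi, image_domRestrict, inter_eq_left.2 hYδ]
  have hGi := hG i (hSi ▸ hY.image ((he x).mono hYx))
  rw [hSi] at hGi
  obtain ⟨J, hJ⟩ := eventually_atTop.1
    (eventually_exists_intervalIndex_eq (hf x) hGi hz (hf_step z x hzx))
  have hJk := Nat.right_le_pair k (J + 1)
  obtain ⟨_, ⟨y, hy, rfl⟩, hyk⟩ := hJ (Nat.pair k (J + 1) - 1) (by omega)
  refine ⟨y, hy, ?_⟩
  rw [color, max_eq_left (hYx hy).le, min_eq_right (hYx hy).le, hyk,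
    Nat.sub_add_cancel (by omega), Nat.unpair_pair]

end Coloring

universe u

instance (x : (aleph.{u} 1).ord.ToType) : Countable (Iio x) :=
  mk_le_aleph0_iff.1 (lt_aleph_one_iff.1 (by simpa using mk_Iio_lt x))

lemma exists_isDominating_of_dNum_eq (h : dNum = aleph 1) :
    ∃ d : (aleph.{u} 1).ord.ToType → ℕ → ℕ, IsDominating d := by
  obtain ⟨A, hA, hdom⟩ : dNum ∈ {c | ∃ A : Set (ℕ → ℕ), #A = c ∧
      ∀ g : ℕ → ℕ, ∃ f ∈ A, {n : ℕ | f n < g n}.Finite} :=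
    csInf_mem ⟨_, Set.univ, rfl, fun g => ⟨g, mem_univ g, by simp⟩⟩
  rw [h] at hA
  obtain ⟨eqv⟩ : Nonempty (A ≃ (aleph.{u} 1).ord.ToType) := lift_mk_eq'.1 (by simp [hA])
  refine ⟨fun x => eqv.symm x, fun g => ?_⟩
  obtain ⟨f, hf, hfin⟩ := hdom g
  refine ⟨eqv ⟨f, hf⟩, ?_⟩
  simpa [EventuallyLE, ← Nat.cofinite_eq_atTop, eventually_cofinite] using hfin

end PolarizedColoring

open PolarizedColoring in
/-- If `𝔡 = ℵ₁`, there is a symmetric colouring `χ : ω₁ × ω₁ → ω` which is onto `ω`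
on every `X × Y` with `|X| = ℵ₁` and `Y` countably infinite; i.e.
`(ω₁,ω₁) ↛ [(ω₁,ω)]^{1,1}_{ℵ₀}`. -/
theorem stmt_6 (h : dNum = Cardinal.aleph 1) :
    ∃ χ : (Cardinal.aleph 1).ord.ToType → (Cardinal.aleph 1).ord.ToType → ℕ,
      (∀ a b, χ a b = χ b a) ∧
      ∀ X : Set (Cardinal.aleph 1).ord.ToType, #X = Cardinal.aleph 1 →
        ∀ Y : Set (Cardinal.aleph 1).ord.ToType, Y.Countable → Y.Infinite →
          ∀ k : ℕ, ∃ x ∈ X, ∃ y ∈ Y, χ x y = k := by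
  obtain ⟨d, hd⟩ := exists_isDominating_of_dNum_eq h
  refine ⟨color walkCode (scale d), color_comm _ _, fun X hX Y hYc hYi k => ?_⟩
  have hXu : ¬X.Countable := by
    rw [← le_aleph0_iff_set_countable, hX]
    exact aleph0_lt_aleph_one.not_ge
  obtain ⟨δ, hδ⟩ := hYc.exists_forall_lt fun _ => hXu X.to_countable
  obtain ⟨z, hz⟩ := exists_surjOn_color walkCode_injOn (countable_range_domRestrict_walkCode δ)
    (strictMono_scale d) (fun _ _ => eventually_scale_lt_scale d) (hd.mono (le_scale d)) hYi hδ
  obtain ⟨x, hxX, hx⟩ := not_bddAbove_iff.1 (not_bddAbove_of_not_countable hXu) (max δ z)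
  obtain ⟨y, hy, hk⟩ := hz x ((le_max_left δ z).trans_lt hx) ((le_max_right δ z).trans_lt hx)
    (mem_univ k)
  exact ⟨x, hxX, y, hy, hk⟩
end

section
/- Let κ be a regular uncountable cardinal with κ > 𝔅, where 𝔅 = stick = min{|X| : X ⊆ [ω₁]^ω and every uncountable Y ⊆ ω₁ contains some member of X}. Then for every coloring c : κ × ω₁ → 2 there exist B ⊆ κ of cardinality κ and a countably infinite D ⊆ ω₁ such that c is constant on B × D. That is, (κ, ω₁) → ((κ, ω))^{1,1}_2. -/
open Cardinal

/-- The stick number: the least cardinality of a family of countably infinite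
subsets of `ω₁` such that every uncountable subset of `ω₁` contains a member. -/
noncomputable def stickNum : Cardinal :=
  sInf {c | ∃ X : Set (Set (Cardinal.aleph 1).ord.ToType), #X = c ∧
    (∀ x ∈ X, x.Countable ∧ x.Infinite) ∧
    ∀ Y : Set (Cardinal.aleph 1).ord.ToType, ¬ Y.Countable → ∃ x ∈ X, x ⊆ Y}

/-!
Fix a stick family of size `stick < κ`. Each row `c α` of the coloring has an uncountable color
class on `ω₁`, which contains a member of the family; so each `α < κ` gets a label
(member, color) making its row constant on that member. There are fewer than `κ` labels, so
by regularity of `κ` some label is shared by `κ` many rows.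
-/

open Set

universe u v

theorem exists_not_countable_preimage_singleton {β γ : Type*} [Uncountable β] [Countable γ]
    (f : β → γ) : ∃ a, ¬ (f ⁻¹' {a}).Countable := by
  by_contra! h
  refine not_countable_univ (α := β) ?_
  simpa only [← preimage_iUnion, iUnion_of_singleton, preimage_univ] using countable_iUnion h

def IsStickFamily {ι β : Type*} (F : ι → Set β) : Prop :=
  (∀ i, (F i).Countable ∧ (F i).Infinite) ∧
    ∀ Y : Set β, ¬ Y.Countable → ∃ i, F i ⊆ Y

theorem isStickFamily_subtype_val_iff {β : Type*} {X : Set (Set β)} :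
    IsStickFamily (Subtype.val : X → Set β) ↔
      (∀ x ∈ X, x.Countable ∧ x.Infinite) ∧
        ∀ Y : Set β, ¬ Y.Countable → ∃ x ∈ X, x ⊆ Y := by
  simp [IsStickFamily]

theorem isStickFamily_countable_infinite (β : Type*) :
    IsStickFamily (Subtype.val : {x : Set β | x.Countable ∧ x.Infinite} → Set β) := by
  refine ⟨fun x => x.2, fun Y hY => ?_⟩
  have hY : ℵ₀ ≤ #Y := infinite_iff.1 <| infinite_coe_iff.2 fun h => hY h.countable
  obtain ⟨x, hxY, hx⟩ := le_mk_iff_exists_subset.1 hY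
  refine ⟨⟨x, le_aleph0_iff_set_countable.1 hx.le, infinite_coe_iff.1 ?_⟩, hxY⟩
  exact infinite_iff.2 hx.ge

namespace IsStickFamily

variable {ι β γ : Type*} {F : ι → Set β}

theorem image_equiv (hF : IsStickFamily F) (e : β ≃ γ) : IsStickFamily fun i => e '' F i := by
  refine ⟨fun i => ⟨(hF.1 i).1.image e, (hF.1 i).2.image e.injective.injOn⟩, fun Y hY => ?_⟩
  obtain ⟨i, hi⟩ := hF.2 (e ⁻¹' Y) fun h => hY (by simpa using h.image e)
  exact ⟨i, (image_mono hi).trans (image_preimage_subset e Y)⟩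

theorem exists_subset_preimage_singleton [Uncountable β] [Countable γ] (hF : IsStickFamily F)
    (f : β → γ) : ∃ i a, F i ⊆ f ⁻¹' {a} := by
  obtain ⟨a, ha⟩ := exists_not_countable_preimage_singleton f
  obtain ⟨i, hi⟩ := hF.2 _ ha
  exact ⟨i, a, hi⟩

theorem exists_card_eq_forall_forall_eq {α ι : Type u} {β : Type*} [Uncountable β]
    {F : ι → Set β} (hF : IsStickFamily F) (hα : (#α).IsRegular) (hι : #ι < #α)
    (c : α → β → Bool) :
    ∃ B : Set α, #B = #α ∧ ∃ i b, ∀ x ∈ B, ∀ y ∈ F i, c x y = b := by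
  choose i b hib using fun x => hF.exists_subset_preimage_singleton (c x)
  have hsmall : #(ι × Bool) < (#α).ord.cof := by
    rw [hα.cof_ord]
    simpa using mul_lt_of_lt hα.aleph0_le hι ((natCast_lt_aleph0 (n := 2)).trans_le hα.aleph0_le)
  obtain ⟨p, hp⟩ := infinite_pigeonhole (fun x => (i x, b x)) hα.aleph0_le hsmall
  refine ⟨_, hp, p.1, p.2, fun x hx y hy => ?_⟩
  simp only [mem_preimage, mem_singleton_iff] at hx
  subst hx
  exact hib x hy

end IsStickFamily

theorem exists_isStickFamily_card_eq_stickNum :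
    ∃ (ι : Type u) (F : ι → Set (aleph 1 : Cardinal.{v}).ord.ToType),
      #ι = stickNum.{u} ∧ IsStickFamily F := by
  obtain ⟨X, hX, hF⟩ : stickNum.{u} ∈ _ := csInf_mem
    ⟨_, _, rfl, isStickFamily_subtype_val_iff.1 (isStickFamily_countable_infinite _)⟩
  obtain ⟨e⟩ : Nonempty
      ((aleph 1 : Cardinal.{u}).ord.ToType ≃ (aleph 1 : Cardinal.{v}).ord.ToType) :=
    lift_mk_eq'.1 (by simp)
  exact ⟨X, _, hX, (isStickFamily_subtype_val_iff.2 hF).image_equiv e⟩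

instance uncountable_aleph_one_ord_toType : Uncountable (aleph 1).ord.ToType :=
  aleph0_lt_mk_iff.1 (by rw [mk_ord_toType]; exact aleph0_lt_aleph_one)

/-- For regular `κ > stick`, every `c : κ × ω₁ → 2` is constant on some `B × D`
with `|B| = κ` and `D` countably infinite: `(κ,ω₁) → ((κ,ω))^{1,1}_2`. -/
theorem stmt_8 (κ : Cardinal) (hreg : κ.IsRegular) (hgt : stickNum < κ)
    (c : κ.ord.ToType → (Cardinal.aleph 1).ord.ToType → Bool) :
    ∃ B : Set κ.ord.ToType, #B = κ ∧
      ∃ D : Set (Cardinal.aleph 1).ord.ToType, D.Countable ∧ D.Infinite ∧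
        ∃ i : Bool, ∀ b ∈ B, ∀ d ∈ D, c b d = i := by
  obtain ⟨ι, F, hι, hF⟩ := exists_isStickFamily_card_eq_stickNum
  have hκ : #κ.ord.ToType = κ := mk_ord_toType κ
  obtain ⟨B, hB, i, b, hc⟩ :=
    hF.exists_card_eq_forall_forall_eq (by rwa [hκ]) (by rwa [hκ, hι]) c
  exact ⟨B, hB.trans hκ, F i, (hF.1 i).1, (hF.1 i).2, b, hc⟩
end

section
/- For κ = ω, the unbounding number 𝔟 is at most the reaping number 𝔯. -/
open Cardinal

/-- The reaping number `𝔯`. -/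
noncomputable def rNum : Cardinal :=
  sInf {c | ∃ A : Set (Set ℕ), #A = c ∧ (∀ Y ∈ A, Y.Infinite) ∧
    ∀ X : Set ℕ, X.Infinite → ∃ Y ∈ A, (Y ∩ X).Finite ∨ (Y \ X).Finite}

/-!
To each infinite `Y ⊆ ℕ` attach `nextFn Y`, sending `n` to the least element of `Y` above `n`.
If a single `g` eventually dominates `nextFn Y` for every `Y` in a family `A`, cut `ℕ` into
blocks `(a k, a (k + 1)]` with `g (a k) ≤ a (k + 1)`. Every `Y ∈ A` then meets all but finitely
many blocks, so the union `X` of the even blocks is split by every `Y ∈ A`, and `A` is not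
reaping. Hence `Y ↦ nextFn Y` sends a reaping family to an unbounded one.
-/

open Filter Set

noncomputable def nextFn (Y : Set ℕ) (n : ℕ) : ℕ := sInf {m | m ∈ Y ∧ n < m}

lemma nextFn_mem_and_gt {Y : Set ℕ} (hY : Y.Infinite) (n : ℕ) :
    nextFn Y n ∈ Y ∧ n < nextFn Y n :=
  Nat.sInf_mem (hY.exists_gt n)

def blockEnds (g : ℕ → ℕ) : ℕ → ℕ
  | 0 => 0
  | k + 1 => max (g (blockEnds g k)) (blockEnds g k + 1)

lemma blockEnds_strictMono (g : ℕ → ℕ) : StrictMono (blockEnds g) :=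
  strictMono_nat_of_lt_succ fun _ => Nat.lt_of_succ_le (le_max_right _ _)

lemma le_blockEnds_succ (g : ℕ → ℕ) (k : ℕ) : g (blockEnds g k) ≤ blockEnds g (k + 1) :=
  le_max_left _ _

def evenBlocks (a : ℕ → ℕ) : Set ℕ := ⋃ k, Ioc (a (2 * k)) (a (2 * k + 1))

lemma evenBlocks_infinite {a : ℕ → ℕ} (ha : StrictMono a) : (evenBlocks a).Infinite := by
  refine (infinite_range_of_injective (ha.injective.comp (f := fun k => 2 * k + 1) ?_)).mono ?_
  · exact fun _ _ h => by simpa using h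
  · rintro _ ⟨k, rfl⟩
    exact mem_iUnion.2 ⟨k, ha (Nat.lt_succ_self _), le_rfl⟩

lemma disjoint_oddBlock_evenBlocks {a : ℕ → ℕ} (ha : Monotone a) (k : ℕ) :
    Disjoint (Ioc (a (2 * k + 1)) (a (2 * k + 2))) (evenBlocks a) := by
  refine disjoint_iUnion_right.2 fun j => ?_
  exact ha.pairwise_disjoint_on_Ioc_succ (show 2 * k + 1 ≠ 2 * j by omega)

lemma infinite_of_eventually_inter_Ioc_nonempty {S : Set ℕ} {a b : ℕ → ℕ}
    (ha : Tendsto a atTop atTop) (h : ∀ᶠ k in atTop, (S ∩ Ioc (a k) (b k)).Nonempty) :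
    S.Infinite := by
  refine infinite_of_forall_exists_gt fun n => ?_
  obtain ⟨k, ⟨m, hmS, hm, -⟩, hk⟩ := (h.and (ha.eventually_gt_atTop n)).exists
  exact ⟨m, hmS, hk.trans hm⟩

lemma inter_evenBlocks_infinite_and_diff_evenBlocks_infinite {Y : Set ℕ} {a : ℕ → ℕ}
    (ha : StrictMono a) (hY : ∀ᶠ k in atTop, (Y ∩ Ioc (a k) (a (k + 1))).Nonempty) :
    (Y ∩ evenBlocks a).Infinite ∧ (Y \ evenBlocks a).Infinite := by
  have htwice (c : ℕ) : Tendsto (fun k => 2 * k + c) atTop atTop :=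
    tendsto_atTop_mono (fun k => show id k ≤ 2 * k + c by dsimp; omega) tendsto_id
  constructor
  · refine infinite_of_eventually_inter_Ioc_nonempty (ha.tendsto_atTop.comp (htwice 0))
      (((htwice 0).eventually hY).mono fun k ⟨m, hmY, hm⟩ => ⟨m, ⟨hmY, ?_⟩, hm⟩)
    exact mem_iUnion.2 ⟨k, hm⟩
  · refine infinite_of_eventually_inter_Ioc_nonempty (ha.tendsto_atTop.comp (htwice 1))
      (((htwice 1).eventually hY).mono fun k ⟨m, hmY, hm⟩ => ⟨m, ⟨hmY, ?_⟩, hm⟩)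
    exact (disjoint_oddBlock_evenBlocks ha.monotone k).notMem_of_mem_left hm

lemma eventually_inter_Ioc_nonempty_of_nextFn_le {Y : Set ℕ} (hY : Y.Infinite) {g a : ℕ → ℕ}
    (hg : nextFn Y ≤ᶠ[atTop] g) (ha : Tendsto a atTop atTop) (hga : ∀ k, g (a k) ≤ a (k + 1)) :
    ∀ᶠ k in atTop, (Y ∩ Ioc (a k) (a (k + 1))).Nonempty :=
  (ha.eventually hg).mono fun k hk =>
    let ⟨hmem, hgt⟩ := nextFn_mem_and_gt hY (a k)
    ⟨nextFn Y (a k), hmem, hgt, hk.trans (hga k)⟩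

lemma exists_nextFn_frequently_gt {A : Set (Set ℕ)} (hinf : ∀ Y ∈ A, Y.Infinite)
    (hreap : ∀ X : Set ℕ, X.Infinite → ∃ Y ∈ A, (Y ∩ X).Finite ∨ (Y \ X).Finite) (g : ℕ → ℕ) :
    ∃ Y ∈ A, {n | g n < nextFn Y n}.Infinite := by
  by_contra! hbdd
  have ha := blockEnds_strictMono g
  obtain ⟨Y, hYA, hfin⟩ := hreap _ (evenBlocks_infinite ha)
  have hdom : nextFn Y ≤ᶠ[atTop] g := by
    rw [← Nat.cofinite_eq_atTop]
    exact eventually_cofinite.2 (by simpa only [not_le] using hbdd Y hYA)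
  obtain ⟨hinter, hdiff⟩ := inter_evenBlocks_infinite_and_diff_evenBlocks_infinite ha
    (eventually_inter_Ioc_nonempty_of_nextFn_le (hinf Y hYA) hdom ha.tendsto_atTop
      (le_blockEnds_succ g))
  exact hfin.elim hinter hdiff

/-- `𝔟 ≤ 𝔯`. -/
theorem stmt_11 : bNum ≤ rNum := by
  obtain ⟨A, hAcard, hinf, hreap⟩ : rNum ∈ _ := csInf_mem
    ⟨_, {Y | Y.Infinite}, rfl, fun _ hY => hY, fun X hX => ⟨X, hX, Or.inr (by simp)⟩⟩
  calc bNum ≤ #(nextFn '' A) :=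
        csInf_le' ⟨_, rfl, fun g => by simpa using exists_nextFn_frequently_gt hinf hreap g⟩
    _ ≤ #A := mk_image_le
    _ = rNum := hAcard
end

section
/- If κ is a regular cardinal, λ = κ⁺, and λ² ↛ (λκ, 4)² holds (witnessed by some 2-coloring of pairs of λ²), then for every ordinal α < λ²·κ we have α ↛ (λκ, 4)². -/
/-!
Cut `α < λ²·κ` into fewer than `κ` blocks of length `λ²`, colour pairs inside a block by a copy
of the given colouring and pairs from different blocks by `0`. A `1`-homogeneous quadruple lies in
a single block. Along a `0`-homogeneous set of type `λκ` the block index is monotone with fewer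
than `κ = cf (λκ)` values, hence eventually constant; as `λκ` is additively indecomposable, that
final segment still has type `λκ`, and it lies in a single block.
-/

open Cardinal

universe u

/-- `negPart θ β` says `θ ↛ (β, 4)²`: there is a 2-colouring of pairs of
ordinals below `θ` with no 0-homogeneous subset of order type `β` and no
1-homogeneous quadruple. -/
def negPart (θ β : Ordinal.{u}) : Prop :=
  ∃ c : Ordinal.{u} → Ordinal.{u} → Bool,
    (¬ ∃ S : β.ToType → Ordinal.{u},
      StrictMono S ∧ (∀ i, S i < θ) ∧
      ∀ i j, S i < S j → c (S i) (S j) = false) ∧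
    (¬ ∃ Q : Finset Ordinal.{u}, ↑Q ⊆ Set.Iio θ ∧ Q.card = 4 ∧
      ∀ a ∈ Q, ∀ b ∈ Q, a < b → c a b = true)

namespace Ordinal

theorem div_le_div_right {a b : Ordinal} (h : a ≤ b) (c : Ordinal) : a / c ≤ b / c := by
  rcases eq_or_ne c 0 with rfl | hc
  · simp only [div_zero, le_refl]
  · exact (mul_le_iff_le_div hc).1 ((mul_div_le a c).trans h)

theorem mod_lt_mod_iff_of_div_eq {a b c : Ordinal} (h : a / c = b / c) :
    a % c < b % c ↔ a < b := by
  conv_rhs => rw [← div_add_mod a c, ← div_add_mod b c, h]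
  exact (add_lt_add_iff_left _).symm

theorem exists_strictMono_le_of_isPrincipal_add {β : Ordinal} (hβ : IsPrincipal (· + ·) β)
    (i : β.ToType) : ∃ T : β.ToType → β.ToType, StrictMono T ∧ ∀ k, i ≤ T k := by
  refine ⟨fun k => ToType.mk ⟨(ToType.toOrd i).1 + (ToType.toOrd k).1,
    Set.mem_Iio.2 (hβ (ToType.toOrd i).2 (ToType.toOrd k).2)⟩, fun k k' hk => ?_, fun k => ?_⟩
  · rw [OrderIso.lt_iff_lt, Subtype.mk_lt_mk, add_lt_add_iff_left, Subtype.coe_lt_coe]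
    exact ToType.mk.symm.lt_iff_lt.2 hk
  · rw [← ToType.mk.symm.le_iff_le, OrderIso.symm_apply_apply, ← Subtype.coe_le_coe]
    exact le_self_add

theorem exists_forall_ge_eq_of_monotone {β μ : Ordinal.{u}} (hμ : μ.card < β.cof)
    {q : β.ToType → Set.Iio μ} (hq : Monotone q) : ∃ i, ∀ j, i ≤ j → q j = q i := by
  have : Nonempty β.ToType := by
    rw [nonempty_toType_iff]
    rintro rfl
    simp at hμ
  refine Filter.eventuallyConst_atTop.1 (.of_monotone_of_lt_cof hq ?_)
  rw [Cardinal.mk_Iio_ordinal, cof_toType, Cardinal.lift_lift]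
  exact Cardinal.lift_lt.2 hμ

end Ordinal

noncomputable def blockColouring (Λ : Ordinal.{u}) (c : Ordinal.{u} → Ordinal.{u} → Bool)
    (x y : Ordinal.{u}) : Bool :=
  decide (x / Λ = y / Λ) && c (x % Λ) (y % Λ)

section blockColouring

variable {Λ : Ordinal.{u}} {c : Ordinal.{u} → Ordinal.{u} → Bool}

theorem blockColouring_eq_true {x y : Ordinal.{u}} :
    blockColouring Λ c x y = true ↔ x / Λ = y / Λ ∧ c (x % Λ) (y % Λ) = true := by
  simp [blockColouring]

theorem blockColouring_of_div_eq {x y : Ordinal.{u}} (h : x / Λ = y / Λ) :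
    blockColouring Λ c x y = c (x % Λ) (y % Λ) := by
  simp [blockColouring, h]

theorem exists_zeroHomogeneous_of_blockColouring (hΛ : Λ ≠ 0) {β μ : Ordinal.{u}}
    (hβ : Ordinal.IsPrincipal (· + ·) β) (hμ : μ.card < β.cof)
    (hS : ∃ S : β.ToType → Ordinal.{u}, StrictMono S ∧ (∀ i, S i < Λ * μ) ∧
      ∀ i j, S i < S j → blockColouring Λ c (S i) (S j) = false) :
    ∃ S : β.ToType → Ordinal.{u}, StrictMono S ∧ (∀ i, S i < Λ) ∧
      ∀ i j, S i < S j → c (S i) (S j) = false := by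
  obtain ⟨S, hSmono, hSlt, hS0⟩ := hS
  let q : β.ToType → Set.Iio μ := fun i => ⟨S i / Λ, (Ordinal.lt_mul_iff_div_lt hΛ).1 (hSlt i)⟩
  have hq : Monotone q := fun i j hij => Ordinal.div_le_div_right (hSmono.monotone hij) Λ
  obtain ⟨i₀, hi₀⟩ := Ordinal.exists_forall_ge_eq_of_monotone hμ hq
  obtain ⟨T, hTmono, hTge⟩ := Ordinal.exists_strictMono_le_of_isPrincipal_add hβ i₀
  have hblock : ∀ k k', S (T k) / Λ = S (T k') / Λ := fun k k' =>
    congrArg Subtype.val ((hi₀ _ (hTge k)).trans (hi₀ _ (hTge k')).symm)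
  refine ⟨fun k => S (T k) % Λ, fun k k' hk => ?_, fun k => Ordinal.mod_lt _ hΛ,
    fun k k' hk => ?_⟩
  · exact (Ordinal.mod_lt_mod_iff_of_div_eq (hblock k k')).2 (hSmono (hTmono hk))
  · rw [← blockColouring_of_div_eq (c := c) (hblock k k')]
    exact hS0 _ _ ((Ordinal.mod_lt_mod_iff_of_div_eq (hblock k k')).1 hk)

theorem exists_oneHomogeneous_of_blockColouring (hΛ : Λ ≠ 0) (Q : Finset Ordinal.{u})
    (hQ : ∀ a ∈ Q, ∀ b ∈ Q, a < b → blockColouring Λ c a b = true) :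
    ∃ Q' : Finset Ordinal.{u}, ↑Q' ⊆ Set.Iio Λ ∧ Q'.card = Q.card ∧
      ∀ a ∈ Q', ∀ b ∈ Q', a < b → c a b = true := by
  have hdiv : ∀ a ∈ Q, ∀ b ∈ Q, a / Λ = b / Λ := by
    intro a ha b hb
    rcases lt_trichotomy a b with hab | rfl | hab
    · exact (blockColouring_eq_true.1 (hQ a ha b hb hab)).1
    · rfl
    · exact (blockColouring_eq_true.1 (hQ b hb a ha hab)).1.symm
  have hmono : StrictMonoOn (· % Λ) (Q : Set Ordinal.{u}) := fun a ha b hb hab =>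
    (Ordinal.mod_lt_mod_iff_of_div_eq (hdiv a ha b hb)).2 hab
  refine ⟨Q.image (· % Λ), ?_, Finset.card_image_of_injOn hmono.injOn, ?_⟩
  · intro x hx
    obtain ⟨a, -, rfl⟩ := Finset.mem_image.1 hx
    exact Ordinal.mod_lt a hΛ
  · simp only [Finset.mem_image]
    rintro _ ⟨a, ha, rfl⟩ _ ⟨b, hb, rfl⟩ hab
    rw [← blockColouring_of_div_eq (c := c) (hdiv a ha b hb)]
    exact hQ a ha b hb ((Ordinal.mod_lt_mod_iff_of_div_eq (hdiv a ha b hb)).1 hab)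

end blockColouring

theorem negPart.mono_left {θ θ' β : Ordinal.{u}} (hθ : θ ≤ θ') (h : negPart θ' β) :
    negPart θ β := by
  obtain ⟨c, hc0, hc1⟩ := h
  refine ⟨c, fun ⟨S, hSmono, hSlt, hS0⟩ => hc0 ⟨S, hSmono, fun i => (hSlt i).trans_le hθ, hS0⟩,
    fun ⟨Q, hQsub, hQcard, hQ1⟩ => hc1 ⟨Q, hQsub.trans (Set.Iio_subset_Iio hθ), hQcard, hQ1⟩⟩

theorem negPart_mul_of_negPart {Λ β μ : Ordinal.{u}} (hΛ : Λ ≠ 0)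
    (hβ : Ordinal.IsPrincipal (· + ·) β) (hμ : μ.card < β.cof) (h : negPart Λ β) :
    negPart (Λ * μ) β := by
  obtain ⟨c, hc0, hc1⟩ := h
  refine ⟨blockColouring Λ c, fun hS => hc0 ?_, fun ⟨Q, _, hQcard, hQ1⟩ => hc1 ?_⟩
  · exact exists_zeroHomogeneous_of_blockColouring hΛ hβ hμ hS
  · obtain ⟨Q', hQ'sub, hQ'card, hQ'1⟩ := exists_oneHomogeneous_of_blockColouring hΛ Q hQ1
    exact ⟨Q', hQ'sub, hQ'card.trans hQcard, hQ'1⟩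

/-- If `κ` is regular, `λ = κ⁺` and `λ² ↛ (λκ, 4)²`, then `α ↛ (λκ, 4)²`
for every ordinal `α < λ²·κ`. -/
theorem stmt_17 (κ : Cardinal.{u}) (hκ : κ.IsRegular)
    (h : negPart ((Order.succ κ).ord * (Order.succ κ).ord)
      ((Order.succ κ).ord * κ.ord)) :
    ∀ α < (Order.succ κ).ord * (Order.succ κ).ord * κ.ord,
      negPart α ((Order.succ κ).ord * κ.ord) := by
  intro α hα
  have hsucc : (Order.succ κ).ord ≠ 0 := Cardinal.ord_eq_zero.not.2 (Order.succ_ne_bot κ)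
  have hκlim : Order.IsSuccLimit κ.ord := Cardinal.isSuccLimit_ord hκ.aleph0_le
  obtain ⟨μ, hμκ, hαμ⟩ := (Ordinal.lt_mul_iff_of_isSuccLimit hκlim).1 hα
  have hprincipal : Ordinal.IsPrincipal (· + ·) ((Order.succ κ).ord * κ.ord) :=
    Ordinal.isPrincipal_add_mul_of_isPrincipal_add _ (Ordinal.one_lt_of_isSuccLimit hκlim).ne'
      (Ordinal.isPrincipal_add_ord hκ.aleph0_le)
  have hcof : μ.card < ((Order.succ κ).ord * κ.ord).cof := by
    rw [Ordinal.cof_mul hsucc hκlim.isSuccPrelimit, hκ.cof_ord]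
    exact Cardinal.lt_ord.1 hμκ
  exact (negPart_mul_of_negPart (mul_ne_zero hsucc hsucc) hprincipal hcof h).mono_left hαμ.le
end

section
/- Suppose ⟨f_α : α < 𝔟⟩ is an unbounded scale in ω^ω with each f_α strictly increasing and f_α(0) ≥ 1, and define g_α : ω → ω by g_α(0) = 0, g_α(n+1) = f_α(g_α(n)). Then for every infinite Y ⊆ ω, letting h(n) := min(Y \ (n+1)), and for every α such that f_α eventually strictly dominates h, Y meets [g_α(m-1), g_α(m)) for all sufficiently large m. -/
/-- Key lemma: if `f` is strictly increasing with `f 0 ≥ 1`, `g` is the orbit of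
`0` under `f`, `Y ⊆ ω` is infinite, `h n = min (Y \ (n+1))`, and `f` eventually
strictly dominates `h`, then `Y` meets the interval `[g m, g (m+1))` for all
sufficiently large `m`. -/
theorem stmt_19 (f : ℕ → ℕ) (hf : StrictMono f) (hf0 : 1 ≤ f 0)
    (g : ℕ → ℕ) (hg0 : g 0 = 0) (hgs : ∀ n, g (n + 1) = f (g n))
    (Y : Set ℕ) (hY : Y.Infinite)
    (h : ℕ → ℕ) (hh : ∀ n, h n = sInf (Y ∩ Set.Ioi n))
    (hdom : {n : ℕ | f n ≤ h n}.Finite) :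
    ∃ M : ℕ, ∀ m ≥ M, ∃ y ∈ Y, g m ≤ y ∧ y < g (m + 1) := by
  obtain ⟨b, hb⟩ := hdom.bddAbove
  have hf1 : ∀ n, n + 1 ≤ f n := by
    intro n
    induction n with
    | zero => exact hf0
    | succ k ih => exact Nat.succ_le_of_lt (lt_of_le_of_lt ih (hf k.lt_succ_self))
  have hgm : ∀ m, m ≤ g m := by
    intro m
    induction m with
    | zero => omega
    | succ k ih =>
      rw [hgs]
      calc k + 1 ≤ g k + 1 := by omega
        _ ≤ f (g k) := hf1 _
  have hne : ∀ n, (Y ∩ Set.Ioi n).Nonempty := by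
    intro n
    have heq : Y \ Set.Iic n = Y ∩ Set.Ioi n := by
      ext x; simp only [Set.mem_diff, Set.mem_Iic, Set.mem_inter_iff, Set.mem_Ioi, not_le]
    have : (Y ∩ Set.Ioi n).Infinite := by
      rw [← heq]; exact hY.diff (Set.finite_Iic n)
    exact this.nonempty
  refine ⟨b + 1, fun m hm => ?_⟩
  have hmem : h (g m) ∈ Y ∩ Set.Ioi (g m) := by rw [hh]; exact Nat.sInf_mem (hne _)
  have hlt : h (g m) < f (g m) := by
    by_contra hle
    push_neg at hle
    have h1 : g m ∈ {n : ℕ | f n ≤ h n} := hle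
    have h2 := hb h1
    have h3 := hgm m
    omega
  exact ⟨h (g m), hmem.1, le_of_lt hmem.2, by rw [hgs]; exact hlt⟩
end
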